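/- In every reachable state of the ASM selection-sort program started from a legal initial state (n ≥ 1, i = 0, j = 1), the invariant 0 ≤ i < j ≤ n holds, and moreover F(i) ≤ F(k) for all k with i < k < j, and F(0) ≤ F(1) ≤ … ≤ F(i) with F(i−1) ≤ F(k) for all k ≥ i (prefix sorted and a minimum-so-far at position i). -/
import Mathlib


/-- A state of the selection-sort ASM: nullary symbols `i`, `j`, `n` and a
unary function `F` over the integers. -/
structure SortState where
  i : ℤ
  j : ℤ
  n : ℤ
  F : ℤ → ℤ

/-- One transition step of the ASM
`if j = n then (if i+1 ≠ n then do {i := i+1; j := i+2})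
 else do {if F(i) > F(j) then do {F(i) := F(j); F(j) := F(i)}; j := j+1}`,
with all enabled assignments applied simultaneously (right-hand sides evaluated
in the current state).  On terminal states (no enabled assignment) it is the identity. -/
noncomputable def sortStep (X : SortState) : SortState :=
  if X.j = X.n then
    (if X.i + 1 ≠ X.n then { X with i := X.i + 1, j := X.i + 2 } else X)
  else
    { X with
      j := X.j + 1,
      F := if X.F X.i > X.F X.j then
          Function.update (Function.update X.F X.i (X.F X.j)) X.j (X.F X.i)
        else X.F }

/-- A state is terminal when no assignment is enabled: `j = n` and `i + 1 = n`. -/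
def sortTerminal (X : SortState) : Prop := X.j = X.n ∧ X.i + 1 = X.n

/-- Legal initial states: `n ≥ 1`, `i = 0`, `j = 1` (and arbitrary `F`). -/
def sortInitial (X : SortState) : Prop := 1 ≤ X.n ∧ X.i = 0 ∧ X.j = 1

def SortInv (X : SortState) : Prop :=
  0 ≤ X.i ∧ X.i < X.j ∧ X.j ≤ X.n ∧
  (∀ k : ℤ, X.i < k → k < X.j → X.F X.i ≤ X.F k) ∧
  (∀ a b : ℤ, 0 ≤ a → a ≤ b → b ≤ X.i → X.F a ≤ X.F b) ∧
  (∀ k : ℤ, 1 ≤ X.i → X.i ≤ k → k < X.n → X.F (X.i - 1) ≤ X.F k)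

lemma sortInv_step (X : SortState) (h : SortInv X) : SortInv (sortStep X) := by
  obtain ⟨h1, h2, h3, h4, h5, h6⟩ := h
  unfold sortStep
  by_cases hjn : X.j = X.n
  · rw [if_pos hjn]
    by_cases hin : X.i + 1 ≠ X.n
    · rw [if_pos hin]
      have hi1 : X.i + 1 < X.n := by omega
      unfold SortInv
      dsimp only
      refine ⟨by omega, by omega, by omega, ?_, ?_, ?_⟩
      · intro k hk1 hk2; omega
      · intro a b ha hab hb
        have hFi : X.F X.i ≤ X.F (X.i + 1) := h4 _ (by omega) (by omega)
        by_cases hbi : b ≤ X.i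
        · exact h5 a b ha hab hbi
        · have hb' : b = X.i + 1 := by omega
          subst hb'
          by_cases hai : a ≤ X.i
          · exact le_trans (h5 a X.i ha hai le_rfl) hFi
          · have : a = X.i + 1 := by omega
            subst this; exact le_rfl
      · intro k _ hk1 hk2
        have he : X.i + 1 - 1 = X.i := by ring
        rw [he]
        exact h4 k (by omega) (by omega)
    · rw [if_neg hin]
      exact ⟨h1, h2, h3, h4, h5, h6⟩
  · rw [if_neg hjn]
    have hjlt : X.j < X.n := lt_of_le_of_ne h3 hjn
    by_cases hgt : X.F X.i > X.F X.j
    · rw [if_pos hgt]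
      have hij : X.i ≠ X.j := ne_of_lt h2
      set G := Function.update (Function.update X.F X.i (X.F X.j)) X.j (X.F X.i)
        with hG
      have hGi : G X.i = X.F X.j := by
        simp [hG, Function.update_apply, hij]
      have hGj : G X.j = X.F X.i := by simp [hG]
      have hGk : ∀ k, k ≠ X.i → k ≠ X.j → G k = X.F k := by
        intro k hk1 hk2; simp [hG, Function.update_apply, hk1, hk2]
      unfold SortInv
      dsimp only
      refine ⟨h1, by omega, by omega, ?_, ?_, ?_⟩
      · intro k hk1 hk2
        rw [hGi]
        by_cases hkj : k = X.j
        · subst hkj; rw [hGj]; exact le_of_lt hgt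
        · rw [hGk k (by omega) hkj]
          exact le_trans (le_of_lt hgt) (h4 k hk1 (by omega))
      · intro a b ha hab hb
        by_cases hbi : b = X.i
        · subst hbi
          rw [hGi]
          by_cases hai : a = X.i
          · subst hai; rw [hGi]
          · have hi1 : 1 ≤ X.i := by omega
            rw [hGk a (by omega) (by omega)]
            exact le_trans (h5 a (X.i - 1) ha (by omega) (by omega))
              (h6 X.j hi1 (by omega) hjlt)
        · rw [hGk a (by omega) (by omega), hGk b hbi (by omega)]
          exact h5 a b ha hab hb
      · intro k hi hk1 hk2
        rw [hGk (X.i - 1) (by omega) (by omega)]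
        by_cases hki : k = X.i
        · subst hki; rw [hGi]; exact h6 X.j hi (by omega) hjlt
        · by_cases hkj : k = X.j
          · subst hkj; rw [hGj]; exact h6 X.i hi le_rfl (by omega)
          · rw [hGk k hki hkj]; exact h6 k hi hk1 hk2
    · rw [if_neg hgt]
      unfold SortInv
      dsimp only
      refine ⟨h1, by omega, by omega, ?_, h5, ?_⟩
      · intro k hk1 hk2
        by_cases hkj : k = X.j
        · subst hkj; exact le_of_not_gt hgt
        · exact h4 k hk1 (by omega)
      · intro k hi hk1 hk2
        exact h6 k hi hk1 hk2

/-- in every reachable state of the sorting ASM started from a legal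
initial state (`n ≥ 1`, `i = 0`, `j = 1`): `0 ≤ i < j ≤ n`; `F(i) ≤ F(k)` for all
`i < k < j`; the prefix `F(0) ≤ … ≤ F(i)` is sorted; and (when `i ≥ 1`)
`F(i−1) ≤ F(k)` for all `k ≥ i` (with `k < n`). -/
theorem sort_invariant (X₀ : SortState) (h₀ : sortInitial X₀) (m : ℕ) :
    0 ≤ (sortStep^[m] X₀).i ∧
    (sortStep^[m] X₀).i < (sortStep^[m] X₀).j ∧
    (sortStep^[m] X₀).j ≤ (sortStep^[m] X₀).n ∧
    (∀ k : ℤ, (sortStep^[m] X₀).i < k → k < (sortStep^[m] X₀).j →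
      (sortStep^[m] X₀).F (sortStep^[m] X₀).i ≤ (sortStep^[m] X₀).F k) ∧
    (∀ a b : ℤ, 0 ≤ a → a ≤ b → b ≤ (sortStep^[m] X₀).i →
      (sortStep^[m] X₀).F a ≤ (sortStep^[m] X₀).F b) ∧
    (∀ k : ℤ, 1 ≤ (sortStep^[m] X₀).i → (sortStep^[m] X₀).i ≤ k →
      k < (sortStep^[m] X₀).n →
      (sortStep^[m] X₀).F ((sortStep^[m] X₀).i - 1) ≤ (sortStep^[m] X₀).F k) := by
  have key : SortInv (sortStep^[m] X₀) := by
    induction m with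
    | zero =>
      obtain ⟨hn, hi, hj⟩ := h₀
      rw [Function.iterate_zero, id_eq]
      unfold SortInv
      rw [hi, hj]
      refine ⟨by omega, by omega, by omega, ?_, ?_, ?_⟩
      · intro k hk1 hk2; omega
      · intro a b ha hab hb
        have : a = b := by omega
        subst this; exact le_rfl
      · intro k hi1 _ _; omega
    | succ m ih =>
      rw [Function.iterate_succ_apply']
      exact sortInv_step _ ih
  exact key
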